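/- arXiv:2202.06053 — 2 statements merged into one kernel-verified Lean document; each statement's English description precedes it below -/
import Mathlib

section
/- Independent bit-flipping of a d-bit vector, where each bit is kept with probability p = e^{ε/2}/(1+e^{ε/2}) > 1/2 and flipped with probability 1-p, satisfies ε-LDP for input vectors differing in at most 2 bit positions: for any two binary vectors B₁, B₂ ∈ {0,1}^d with Hamming distance at most 2 and any output B, Pr[output = B | input = B₁] ≤ e^ε · Pr[output = B | input = B₂]. -/
theorem bit_flip_ldp (ε : ℝ) (hε : 0 ≤ ε) (d : ℕ)
    (p : ℝ) (hp : p = Real.exp (ε / 2) / (1 + Real.exp (ε / 2)))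
    (B₁ B₂ : Fin d → Bool)
    (hham : (Finset.univ.filter (fun i => B₁ i ≠ B₂ i)).card ≤ 2) :
    ∀ B : Fin d → Bool,
      (∏ i, if B i = B₁ i then p else 1 - p) ≤
        Real.exp ε * ∏ i, if B i = B₂ i then p else 1 - p := by
  intro B
  set e := Real.exp (ε / 2) with he
  have hepos : 0 < e := Real.exp_pos _
  have he1 : 1 ≤ e := by
    rw [he]; exact Real.one_le_exp (by linarith)
  have hden : 0 < 1 + e := by linarith
  have hpp : 0 < p := by rw [hp]; positivity
  have hp1 : p < 1 := by
    rw [hp, div_lt_one hden]; linarith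
  have h1e : (1 + e) * p = e := by
    rw [hp]; field_simp
  have hpe : p = e * (1 - p) := by nlinarith [h1e]
  have hqe : 1 - p ≤ e * p := by nlinarith [h1e]
  have hqpos : 0 < 1 - p := by nlinarith [h1e]
  -- pointwise bound
  have key : ∀ i : Fin d,
      (if B i = B₁ i then p else 1 - p) ≤
        (if B₁ i ≠ B₂ i then e else 1) * (if B i = B₂ i then p else 1 - p) := by
    intro i
    by_cases h12 : B₁ i = B₂ i
    · simp [h12]
    · rw [if_pos h12]
      by_cases h1 : B i = B₁ i
      · have h2 : ¬ B i = B₂ i := fun h => h12 (h1 ▸ h)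
        rw [if_pos h1, if_neg h2]
        exact hpe.le
      · have h2 : B i = B₂ i := by
          revert h1 h12
          cases B i <;> cases B₁ i <;> cases B₂ i <;> decide
        rw [if_neg h1, if_pos h2]
        exact hqe
  have nonneg : ∀ i ∈ Finset.univ, (0:ℝ) ≤ if B i = B₁ i then p else 1 - p := by
    intro i _; split <;> linarith
  calc (∏ i, if B i = B₁ i then p else 1 - p)
      ≤ ∏ i, (if B₁ i ≠ B₂ i then e else 1) * (if B i = B₂ i then p else 1 - p) :=
        Finset.prod_le_prod nonneg (fun i _ => key i)
    _ = (∏ i, (if B₁ i ≠ B₂ i then e else 1)) * ∏ i, (if B i = B₂ i then p else 1 - p) :=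
        Finset.prod_mul_distrib
    _ ≤ Real.exp ε * ∏ i, (if B i = B₂ i then p else 1 - p) := by
        apply mul_le_mul_of_nonneg_right
        · have hprod : (∏ i, (if B₁ i ≠ B₂ i then e else 1)) =
              e ^ (Finset.univ.filter (fun i => B₁ i ≠ B₂ i)).card := by
            rw [Finset.prod_ite, Finset.prod_const, Finset.prod_const, one_pow, mul_one]
          rw [hprod]
          set k := (Finset.univ.filter (fun i => B₁ i ≠ B₂ i)).card
          calc e ^ k = Real.exp ((ε / 2) * k) := by
                rw [he, ← Real.exp_nat_mul]; ring_nf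
            _ ≤ Real.exp ε := by
                apply Real.exp_le_exp.mpr
                have : (k : ℝ) ≤ 2 := by exact_mod_cast hham
                nlinarith
        · exact Finset.prod_nonneg fun i _ => by split <;> linarith
end

section
/- For unary encoding with keep-probability p ∈ (0,1) and flip-up probability q ∈ (0,1), and any two one-hot d-bit inputs with 1s at positions v₁ ≠ v₂, the worst-case likelihood ratio over all outputs B equals (p(1-q))/((1-p)q); hence the mechanism satisfies ε-LDP if and only if ln(p(1-q)/((1-p)q)) ≤ ε (assuming p ≥ q). -/
/-- Probability that unary encoding with one-hot input at position `v`
(keep-probability `p` for the 1-bit, flip-up probability `q` for 0-bits)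
outputs the bit vector `B`. -/
def ueProb {d : ℕ} (p q : ℝ) (v : Fin d) (B : Fin d → Bool) : ℝ :=
  ∏ i, if i = v then (if B i then p else 1 - p) else (if B i then q else 1 - q)

lemma ueProb_pos {d : ℕ} {p q : ℝ} (hp : p ∈ Set.Ioo (0 : ℝ) 1)
    (hq : q ∈ Set.Ioo (0 : ℝ) 1) (v : Fin d) (B : Fin d → Bool) :
    0 < ueProb p q v B := by
  obtain ⟨hp0, hp1⟩ := hp
  obtain ⟨hq0, hq1⟩ := hq
  apply Finset.prod_pos
  intro i _
  split_ifs <;> linarith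

lemma ueProb_ratio {d : ℕ} {p q : ℝ} (hp : p ∈ Set.Ioo (0 : ℝ) 1)
    (hq : q ∈ Set.Ioo (0 : ℝ) 1) (v₁ v₂ : Fin d) (hv : v₁ ≠ v₂) (B : Fin d → Bool) :
    ueProb p q v₁ B / ueProb p q v₂ B =
      ((if B v₁ then p else 1 - p) / (if B v₁ then q else 1 - q)) *
      ((if B v₂ then q else 1 - q) / (if B v₂ then p else 1 - p)) := by
  obtain ⟨hp0, hp1⟩ := hp
  obtain ⟨hq0, hq1⟩ := hq
  unfold ueProb
  rw [← Finset.prod_div_distrib]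
  have hsub : ({v₁, v₂} : Finset (Fin d)) ⊆ Finset.univ := Finset.subset_univ _
  rw [← Finset.prod_subset hsub]
  · rw [Finset.prod_pair hv]
    simp [hv, hv.symm]
  · intro i _ hi
    simp only [Finset.mem_insert, Finset.mem_singleton, not_or] at hi
    rw [if_neg hi.1, if_neg hi.2]
    have : (if B i then q else 1 - q) ≠ 0 := by split_ifs <;> linarith
    exact div_self this

lemma ueProb_ratio_le {d : ℕ} {p q : ℝ} (hp : p ∈ Set.Ioo (0 : ℝ) 1)
    (hq : q ∈ Set.Ioo (0 : ℝ) 1) (v₁ v₂ : Fin d) (hv : v₁ ≠ v₂) (hpq : q ≤ p)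
    (B : Fin d → Bool) :
    ueProb p q v₁ B / ueProb p q v₂ B ≤ (p * (1 - q)) / ((1 - p) * q) := by
  obtain ⟨hp0, hp1⟩ := hp
  obtain ⟨hq0, hq1⟩ := hq
  rw [ueProb_ratio ⟨hp0, hp1⟩ ⟨hq0, hq1⟩ v₁ v₂ hv B]
  rcases Bool.eq_false_or_eq_true (B v₁) with h1 | h1 <;>
    rcases Bool.eq_false_or_eq_true (B v₂) with h2 | h2 <;>
      simp only [h1, h2, if_true, if_false, Bool.false_eq_true] <;>
      rw [div_mul_div_comm, div_le_div_iff₀ (by nlinarith) (by nlinarith)] <;>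
      nlinarith [mul_pos hq0 hp0, mul_pos hq0 (sub_pos.mpr hp1),
        mul_pos hp0 (sub_pos.mpr hq1), mul_nonneg (mul_nonneg hq0.le hp0.le)
          (mul_nonneg (sub_pos.mpr hp1).le (sub_pos.mpr hq1).le),
        sq_nonneg (p - q), sq_nonneg (p + q - 1)]

theorem ue_worst_case_ratio {d : ℕ} (p q : ℝ)
    (hp : p ∈ Set.Ioo (0 : ℝ) 1) (hq : q ∈ Set.Ioo (0 : ℝ) 1)
    (v₁ v₂ : Fin d) (hv : v₁ ≠ v₂) (hpq : q ≤ p) :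
    IsGreatest {r : ℝ | ∃ B : Fin d → Bool, r = ueProb p q v₁ B / ueProb p q v₂ B}
      ((p * (1 - q)) / ((1 - p) * q)) ∧
    ∀ ε : ℝ, (∀ B : Fin d → Bool, ueProb p q v₁ B ≤ Real.exp ε * ueProb p q v₂ B) ↔
      Real.log ((p * (1 - q)) / ((1 - p) * q)) ≤ ε := by
  obtain ⟨hp0, hp1⟩ := hp
  obtain ⟨hq0, hq1⟩ := hq
  set B₀ : Fin d → Bool := fun i => decide (i = v₁) with hB₀
  have hB₀v₁ : B₀ v₁ = true := by simp [hB₀]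
  have hB₀v₂ : B₀ v₂ = false := by simp [hB₀, hv.symm]
  have hM : ueProb p q v₁ B₀ / ueProb p q v₂ B₀ = (p * (1 - q)) / ((1 - p) * q) := by
    rw [ueProb_ratio ⟨hp0, hp1⟩ ⟨hq0, hq1⟩ v₁ v₂ hv B₀, hB₀v₁, hB₀v₂]
    simp only [if_true, if_false, Bool.false_eq_true]
    rw [div_mul_div_comm]
    ring_nf
  have hMpos : 0 < (p * (1 - q)) / ((1 - p) * q) := div_pos (by nlinarith) (by nlinarith)
  have hgreat : IsGreatest
      {r : ℝ | ∃ B : Fin d → Bool, r = ueProb p q v₁ B / ueProb p q v₂ B}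
      ((p * (1 - q)) / ((1 - p) * q)) := by
    constructor
    · exact ⟨B₀, hM.symm⟩
    · rintro r ⟨B, rfl⟩
      exact ueProb_ratio_le ⟨hp0, hp1⟩ ⟨hq0, hq1⟩ v₁ v₂ hv hpq B
  refine ⟨hgreat, fun ε => ?_⟩
  rw [Real.log_le_iff_le_exp hMpos]
  constructor
  · intro h
    have h2 := h B₀
    have hpos := ueProb_pos ⟨hp0, hp1⟩ ⟨hq0, hq1⟩ v₂ B₀
    rw [← hM, div_le_iff₀ hpos]
    linarith
  · intro h B
    have hpos := ueProb_pos ⟨hp0, hp1⟩ ⟨hq0, hq1⟩ v₂ B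
    have h3 := ueProb_ratio_le ⟨hp0, hp1⟩ ⟨hq0, hq1⟩ v₁ v₂ hv hpq B
    rw [div_le_iff₀ hpos] at h3
    calc ueProb p q v₁ B ≤ (p * (1 - q)) / ((1 - p) * q) * ueProb p q v₂ B := h3
      _ ≤ Real.exp ε * ueProb p q v₂ B := by
          apply mul_le_mul_of_nonneg_right h hpos.le
end
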